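/- Let y ∈ L¹(0,1), x, x₁, x₂ ∈ Ω(y) with x = (x₁ + x₂)/2. Suppose t₁ < t₂ in (0,1) are such that λ(x) is constant on [t₁, t₂), and ∫₀^{t₁} λ(s; x) ds = ∫₀^{t₁} λ(s; y) ds and ∫₀^{t₂} λ(s; x) ds = ∫₀^{t₂} λ(s; y) ds. Then ∫₀^{t_i} λ(s; x₁) ds = ∫₀^{t_i} λ(s; x₂) ds = ∫₀^{t_i} λ(s; y) ds for i = 1, 2. -/

import Mathlib

open MeasureTheory Set

/-- The decreasing rearrangement (spectral scale) of `f` on `(0,1)`. -/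
noncomputable def rr (f : ℝ → ℝ) (t : ℝ) : ℝ :=
  sInf {s : ℝ | volume {u ∈ Ioo (0:ℝ) 1 | s < f u} ≤ ENNReal.ofReal t}

/-- Hardy–Littlewood–Pólya majorisation `g ≺ f` on `(0,1)`. -/
def Maj (g f : ℝ → ℝ) : Prop :=
  (∀ s ∈ Ico (0:ℝ) 1, (∫ t in Ioo (0:ℝ) s, rr g t) ≤ ∫ t in Ioo (0:ℝ) s, rr f t) ∧
    (∫ t in Ioo (0:ℝ) 1, rr g t) = ∫ t in Ioo (0:ℝ) 1, rr f t

/-- The orbit `Ω(y)` of all integrable functions on `(0,1)` majorised by `y`. -/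
def Omega (y : ℝ → ℝ) : Set (ℝ → ℝ) :=
  {x | IntegrableOn x (Ioo (0:ℝ) 1) ∧ Maj x y}

/-- `x` is an extreme point of the convex set `Ω` (functions identified a.e. on `(0,1)`). -/
def ExtremePt (Ω : Set (ℝ → ℝ)) (x : ℝ → ℝ) : Prop :=
  x ∈ Ω ∧ ∀ x₁ ∈ Ω, ∀ x₂ ∈ Ω,
    (∀ᵐ u ∂(volume.restrict (Ioo (0:ℝ) 1)), x u = (x₁ u + x₂ u) / 2) →
    (∀ᵐ u ∂(volume.restrict (Ioo (0:ℝ) 1)), x₁ u = x₂ u)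

/-!
The partial integral `∫₀ᵗ λ(f)` has the variational description `min_c (c t + ∫₀¹ (f - c)⁺)`,
the minimum being attained at `c = λ(t; f)`: on `(0, t)` one has `λ(f) = (λ(f) - c)⁺ + c`, and
`(λ(f) - c)⁺` vanishes on `[t, 1)` and has the same integral as `(f - c)⁺` because `λ(f)` and `f`
are equimeasurable (layer-cake formula). As an infimum of convex functionals, `f ↦ ∫₀ᵗ λ(f)` is
convex, so `∫₀ᵗ λ(x) ≤ (∫₀ᵗ λ(x₁) + ∫₀ᵗ λ(x₂)) / 2 ≤ ∫₀ᵗ λ(y)`; equality of the two ends at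
`t = t₁, t₂` forces equality throughout.
-/

open Filter Topology
open scoped ENNReal

-- `rr f t` unfolds to `sInf {s | distFun f s ≤ ENNReal.ofReal t}`.
noncomputable def distFun (f : ℝ → ℝ) (s : ℝ) : ℝ≥0∞ := volume {u ∈ Ioo (0:ℝ) 1 | s < f u}

section Rearrangement

variable {f : ℝ → ℝ}

lemma distFun_eq_restrict (s : ℝ) :
    distFun f s = volume.restrict (Ioo (0:ℝ) 1) {u | s < f u} := by
  rw [distFun, Measure.restrict_apply' measurableSet_Ioo, inter_comm]
  rfl

lemma distFun_antitone : Antitone (distFun f) := fun _ _ hab =>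
  measure_mono fun _ hu => ⟨hu.1, hab.trans_lt hu.2⟩

lemma distFun_le_one (s : ℝ) : distFun f s ≤ 1 :=
  (measure_mono (sep_subset _ _)).trans_eq (by simp [Real.volume_Ioo])

lemma distFun_ne_top (s : ℝ) : distFun f s ≠ ∞ :=
  ne_top_of_le_ne_top ENNReal.one_ne_top (distFun_le_one s)

lemma tendsto_distFun_atTop (hf : AEMeasurable f (volume.restrict (Ioo (0:ℝ) 1))) :
    Tendsto (distFun f) atTop (𝓝 0) := by
  have hInter : ⋂ s : ℝ, {u | s < f u} = ∅ :=
    eq_empty_of_forall_notMem fun u hu => lt_irrefl (f u) (mem_iInter.1 hu (f u))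
  have := tendsto_measure_iInter_atTop (μ := volume.restrict (Ioo (0:ℝ) 1))
    (s := fun s : ℝ => {u | s < f u})
    (fun s => nullMeasurableSet_lt aemeasurable_const hf)
    (fun _ _ hab _ hu => hab.trans_lt hu) ⟨0, (distFun_eq_restrict 0).symm ▸ distFun_ne_top 0⟩
  simpa only [hInter, measure_empty, Function.comp_def, ← distFun_eq_restrict] using this

lemma tendsto_distFun_atBot : Tendsto (distFun f) atBot (𝓝 1) := by
  have hUnion : ⋃ s : ℝ, {u | s < f u} = univ :=
    eq_univ_of_forall fun u => mem_iUnion.2 ⟨f u - 1, by simp⟩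
  have := tendsto_measure_iUnion_atBot (μ := volume.restrict (Ioo (0:ℝ) 1))
    (s := fun s : ℝ => {u | s < f u}) (fun _ _ hab _ hu => hab.trans_lt hu)
  rw [hUnion, Measure.restrict_apply_univ, Real.volume_Ioo, sub_zero, ENNReal.ofReal_one] at this
  simpa only [Function.comp_def, ← distFun_eq_restrict] using this

lemma exists_distFun_le (hf : AEMeasurable f (volume.restrict (Ioo (0:ℝ) 1))) {u : ℝ}
    (hu : 0 < u) : ∃ s, distFun f s ≤ ENNReal.ofReal u :=
  ((tendsto_distFun_atTop hf).eventually (ge_mem_nhds (ENNReal.ofReal_pos.2 hu))).exists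

lemma bddBelow_setOf_distFun_le {u : ℝ} (hu : u < 1) :
    BddBelow {s | distFun f s ≤ ENNReal.ofReal u} := by
  obtain ⟨a, ha⟩ := eventually_atBot.1
    (tendsto_distFun_atBot.eventually (lt_mem_nhds (ENNReal.ofReal_lt_one.2 hu)))
  exact ⟨a, fun s hs => le_of_not_gt fun hsa => (ha s hsa.le).not_ge hs⟩

lemma distFun_le_of_forall_lt {s : ℝ} {a : ℝ≥0∞} (h : ∀ s', s < s' → distFun f s' ≤ a) :
    distFun f s ≤ a := by
  set S : ℕ → Set ℝ := fun n => {u ∈ Ioo (0:ℝ) 1 | s + 1 / (n + 1) < f u}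
  have hS : Monotone S := fun n m hnm u hu =>
    ⟨hu.1, (add_le_add_right (Nat.one_div_le_one_div hnm) s).trans_lt hu.2⟩
  have hUnion : ⋃ n, S n = {u ∈ Ioo (0:ℝ) 1 | s < f u} := by
    ext u
    simp only [S, mem_iUnion, mem_ofPred_eq]
    refine ⟨fun ⟨n, hu, hn⟩ => ⟨hu, (lt_add_of_pos_right s Nat.one_div_pos_of_nat).trans hn⟩,
      fun ⟨hu, hsu⟩ => ?_⟩
    obtain ⟨n, hn⟩ := exists_nat_one_div_lt (sub_pos.2 hsu)
    exact ⟨n, hu, by linarith⟩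
  rw [distFun, ← hUnion, hS.measure_iUnion]
  exact iSup_le fun n => h _ (lt_add_of_pos_right s Nat.one_div_pos_of_nat)

lemma rr_le_iff (hf : AEMeasurable f (volume.restrict (Ioo (0:ℝ) 1))) {u : ℝ}
    (hu : u ∈ Ioo (0:ℝ) 1) (s : ℝ) : rr f u ≤ s ↔ distFun f s ≤ ENNReal.ofReal u := by
  refine ⟨fun h => distFun_le_of_forall_lt fun s' hs' => ?_,
    fun h => csInf_le (bddBelow_setOf_distFun_le hu.2) h⟩
  obtain ⟨r, hr, hrs'⟩ := exists_lt_of_csInf_lt (exists_distFun_le hf hu.1) (h.trans_lt hs')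
  exact (distFun_antitone hrs'.le).trans hr

lemma lt_rr_iff (hf : AEMeasurable f (volume.restrict (Ioo (0:ℝ) 1))) {u : ℝ}
    (hu : u ∈ Ioo (0:ℝ) 1) (s : ℝ) : s < rr f u ↔ u < (distFun f s).toReal := by
  rw [← not_le, rr_le_iff hf hu, not_le,
    ENNReal.ofReal_lt_iff_lt_toReal hu.1.le (distFun_ne_top s)]

lemma rr_antitoneOn (hf : AEMeasurable f (volume.restrict (Ioo (0:ℝ) 1))) :
    AntitoneOn (rr f) (Ioo (0:ℝ) 1) := fun _ ha _ hb hab =>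
  (rr_le_iff hf hb _).2 (((rr_le_iff hf ha _).1 le_rfl).trans (ENNReal.ofReal_le_ofReal hab))

lemma aemeasurable_rr (hf : AEMeasurable f (volume.restrict (Ioo (0:ℝ) 1))) :
    AEMeasurable (rr f) (volume.restrict (Ioo (0:ℝ) 1)) :=
  aemeasurable_restrict_of_antitoneOn measurableSet_Ioo (rr_antitoneOn hf)

lemma setOf_lt_rr (hf : AEMeasurable f (volume.restrict (Ioo (0:ℝ) 1))) (s : ℝ) :
    {u ∈ Ioo (0:ℝ) 1 | s < rr f u} = Ioo 0 (distFun f s).toReal := by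
  ext u
  refine ⟨fun ⟨hu, hsu⟩ => ⟨hu.1, (lt_rr_iff hf hu s).1 hsu⟩, fun ⟨hu0, huD⟩ => ?_⟩
  have hu : u ∈ Ioo (0:ℝ) 1 := ⟨hu0, huD.trans_le
    (ENNReal.toReal_le_of_le_ofReal zero_le_one (ENNReal.ofReal_one ▸ distFun_le_one s))⟩
  exact ⟨hu, (lt_rr_iff hf hu s).2 huD⟩

lemma distFun_rr (hf : AEMeasurable f (volume.restrict (Ioo (0:ℝ) 1))) (s : ℝ) :
    distFun (rr f) s = distFun f s := by
  rw [distFun, setOf_lt_rr hf, Real.volume_Ioo, sub_zero,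
    ENNReal.ofReal_toReal (distFun_ne_top s)]

end Rearrangement

section PartialIntegrals

variable {f : ℝ → ℝ}

lemma lintegral_posPart_sub_eq (hf : AEMeasurable f (volume.restrict (Ioo (0:ℝ) 1))) (c : ℝ) :
    ∫⁻ u in Ioo (0:ℝ) 1, ENNReal.ofReal (max (f u - c) 0) =
      ∫⁻ t in Ioi (0:ℝ), distFun f (c + t) := by
  rw [lintegral_eq_lintegral_meas_lt _ (ae_of_all _ fun u => le_max_right (f u - c) 0)
    ((hf.sub_const c).max aemeasurable_const)]
  refine setLIntegral_congr_fun measurableSet_Ioi fun t ht => ?_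
  have hlevel : {u | t < max (f u - c) 0} = {u | c + t < f u} := by
    ext u
    simp only [mem_ofPred_eq, lt_max_iff, or_iff_left (not_lt.2 (le_of_lt (mem_Ioi.1 ht))),
      lt_sub_iff_add_lt']
  rw [hlevel, distFun_eq_restrict]

lemma lintegral_posPart_rr_sub (hf : AEMeasurable f (volume.restrict (Ioo (0:ℝ) 1))) (c : ℝ) :
    ∫⁻ u in Ioo (0:ℝ) 1, ENNReal.ofReal (max (rr f u - c) 0) =
      ∫⁻ u in Ioo (0:ℝ) 1, ENNReal.ofReal (max (f u - c) 0) := by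
  simp only [lintegral_posPart_sub_eq (aemeasurable_rr hf), lintegral_posPart_sub_eq hf,
    distFun_rr hf]

lemma integrableOn_posPart_sub (hf : IntegrableOn f (Ioo (0:ℝ) 1)) (c : ℝ) :
    IntegrableOn (fun u => max (f u - c) 0) (Ioo (0:ℝ) 1) :=
  (hf.sub (integrableOn_const (C := c) measure_Ioo_lt_top.ne)).pos_part

lemma integrableOn_posPart_rr_sub (hf : IntegrableOn f (Ioo (0:ℝ) 1)) (c : ℝ) :
    IntegrableOn (fun u => max (rr f u - c) 0) (Ioo (0:ℝ) 1) := by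
  refine ⟨((aemeasurable_rr hf.aemeasurable).sub_const c).max aemeasurable_const
    |>.aestronglyMeasurable, ?_⟩
  rw [hasFiniteIntegral_iff_ofReal (ae_of_all _ fun u => le_max_right (rr f u - c) 0),
    lintegral_posPart_rr_sub hf.aemeasurable c,
    ← hasFiniteIntegral_iff_ofReal (ae_of_all _ fun u => le_max_right (f u - c) 0)]
  exact (integrableOn_posPart_sub hf c).2

lemma integral_posPart_rr_sub (hf : IntegrableOn f (Ioo (0:ℝ) 1)) (c : ℝ) :
    ∫ u in Ioo (0:ℝ) 1, max (rr f u - c) 0 = ∫ u in Ioo (0:ℝ) 1, max (f u - c) 0 := by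
  rw [integral_eq_lintegral_of_nonneg_ae (ae_of_all _ fun u => le_max_right (rr f u - c) 0)
      (integrableOn_posPart_rr_sub hf c).aestronglyMeasurable,
    integral_eq_lintegral_of_nonneg_ae (ae_of_all _ fun u => le_max_right (f u - c) 0)
      (integrableOn_posPart_sub hf c).aestronglyMeasurable,
    lintegral_posPart_rr_sub hf.aemeasurable c]

lemma setIntegral_posPart_rr_sub_add (hf : IntegrableOn f (Ioo (0:ℝ) 1)) {t : ℝ}
    (ht : t ∈ Ioo (0:ℝ) 1) (c : ℝ) :
    ∫ u in Ioo (0:ℝ) t, (max (rr f u - c) 0 + c) =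
      (∫ u in Ioo (0:ℝ) t, max (rr f u - c) 0) + c * t := by
  rw [integral_add ((integrableOn_posPart_rr_sub hf c).mono_set (Ioo_subset_Ioo_right ht.2.le))
    (integrableOn_const measure_Ioo_lt_top.ne), setIntegral_const, Real.volume_real_Ioo_of_le ht.1.le, sub_zero,
    smul_eq_mul, mul_comm]

lemma rr_eq_posPart_sub_add (hf : IntegrableOn f (Ioo (0:ℝ) 1)) {t u : ℝ}
    (ht : t ∈ Ioo (0:ℝ) 1) (hu : u ∈ Ioo (0:ℝ) t) :
    rr f u = max (rr f u - rr f t) 0 + rr f t := by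
  have : rr f t ≤ rr f u :=
    rr_antitoneOn hf.aemeasurable ⟨hu.1, hu.2.trans ht.2⟩ ht hu.2.le
  rw [max_eq_left (sub_nonneg.2 this), sub_add_cancel]

lemma integrableOn_rr (hf : IntegrableOn f (Ioo (0:ℝ) 1)) {t : ℝ} (ht : t ∈ Ioo (0:ℝ) 1) :
    IntegrableOn (rr f) (Ioo (0:ℝ) t) :=
  (((integrableOn_posPart_rr_sub hf (rr f t)).mono_set (Ioo_subset_Ioo_right ht.2.le)).add
    (integrableOn_const measure_Ioo_lt_top.ne)).congr_fun (fun _ hu => (rr_eq_posPart_sub_add hf ht hu).symm)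
    measurableSet_Ioo

lemma setIntegral_rr_le (hf : IntegrableOn f (Ioo (0:ℝ) 1)) {t : ℝ} (ht : t ∈ Ioo (0:ℝ) 1)
    (c : ℝ) :
    ∫ u in Ioo (0:ℝ) t, rr f u ≤ c * t + ∫ u in Ioo (0:ℝ) 1, max (f u - c) 0 := by
  have hsub : Ioo (0:ℝ) t ⊆ Ioo 0 1 := Ioo_subset_Ioo_right ht.2.le
  calc ∫ u in Ioo (0:ℝ) t, rr f u
      ≤ ∫ u in Ioo (0:ℝ) t, (max (rr f u - c) 0 + c) :=
        integral_mono (integrableOn_rr hf ht)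
          (((integrableOn_posPart_rr_sub hf c).mono_set hsub).add
            (integrableOn_const measure_Ioo_lt_top.ne))
          fun u => by linarith [le_max_left (rr f u - c) 0]
    _ = (∫ u in Ioo (0:ℝ) t, max (rr f u - c) 0) + c * t :=
        setIntegral_posPart_rr_sub_add hf ht c
    _ ≤ (∫ u in Ioo (0:ℝ) 1, max (rr f u - c) 0) + c * t :=
        add_le_add_left (setIntegral_mono_set (integrableOn_posPart_rr_sub hf c)
          (ae_of_all _ fun u => le_max_right (rr f u - c) 0) hsub.eventuallyLE) _
    _ = c * t + ∫ u in Ioo (0:ℝ) 1, max (f u - c) 0 := by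
        rw [integral_posPart_rr_sub hf, add_comm]

lemma setIntegral_rr_eq (hf : IntegrableOn f (Ioo (0:ℝ) 1)) {t : ℝ} (ht : t ∈ Ioo (0:ℝ) 1) :
    ∫ u in Ioo (0:ℝ) t, rr f u = rr f t * t + ∫ u in Ioo (0:ℝ) 1, max (f u - rr f t) 0 := by
  have hvanish : ∀ u ∈ Ioo (0:ℝ) 1 \ Ioo 0 t, max (rr f u - rr f t) 0 = 0 := fun u ⟨hu, hut⟩ =>
    max_eq_right (sub_nonpos.2 (rr_antitoneOn hf.aemeasurable ht hu
      (not_lt.1 fun h => hut ⟨hu.1, h⟩)))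
  calc ∫ u in Ioo (0:ℝ) t, rr f u
      = ∫ u in Ioo (0:ℝ) t, (max (rr f u - rr f t) 0 + rr f t) :=
        setIntegral_congr_fun measurableSet_Ioo fun _ hu => rr_eq_posPart_sub_add hf ht hu
    _ = (∫ u in Ioo (0:ℝ) t, max (rr f u - rr f t) 0) + rr f t * t :=
        setIntegral_posPart_rr_sub_add hf ht _
    _ = (∫ u in Ioo (0:ℝ) 1, max (rr f u - rr f t) 0) + rr f t * t := by
        rw [setIntegral_eq_of_subset_of_forall_sdiff_eq_zero measurableSet_Ioo
          (Ioo_subset_Ioo_right ht.2.le) hvanish]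
    _ = rr f t * t + ∫ u in Ioo (0:ℝ) 1, max (f u - rr f t) 0 := by
        rw [integral_posPart_rr_sub hf, add_comm]

end PartialIntegrals

lemma setIntegral_rr_le_of_eq_mul_add_mul {x x₁ x₂ : ℝ → ℝ} {a b t : ℝ} (ha : 0 ≤ a)
    (hb : 0 ≤ b) (hx₁ : IntegrableOn x₁ (Ioo (0:ℝ) 1)) (hx₂ : IntegrableOn x₂ (Ioo (0:ℝ) 1))
    (hx : ∀ u, x u = a * x₁ u + b * x₂ u) (ht : t ∈ Ioo (0:ℝ) 1) :
    ∫ u in Ioo (0:ℝ) t, rr x u ≤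
      a * (∫ u in Ioo (0:ℝ) t, rr x₁ u) + b * ∫ u in Ioo (0:ℝ) t, rr x₂ u := by
  have heq₁ := setIntegral_rr_eq hx₁ ht
  have heq₂ := setIntegral_rr_eq hx₂ ht
  set c₁ := rr x₁ t
  set c₂ := rr x₂ t
  have hxi : IntegrableOn x (Ioo (0:ℝ) 1) := by
    rw [funext hx]
    exact (hx₁.const_mul a).add (hx₂.const_mul b)
  have hpos : ∫ u in Ioo (0:ℝ) 1, max (x u - (a * c₁ + b * c₂)) 0 ≤
      a * (∫ u in Ioo (0:ℝ) 1, max (x₁ u - c₁) 0) +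
        b * ∫ u in Ioo (0:ℝ) 1, max (x₂ u - c₂) 0 := by
    rw [← integral_const_mul, ← integral_const_mul,
      ← integral_add ((integrableOn_posPart_sub hx₁ c₁).const_mul a)
        ((integrableOn_posPart_sub hx₂ c₂).const_mul b)]
    refine integral_mono (integrableOn_posPart_sub hxi _)
      (((integrableOn_posPart_sub hx₁ c₁).const_mul a).add
        ((integrableOn_posPart_sub hx₂ c₂).const_mul b)) fun u => max_le ?_ ?_
    · calc x u - (a * c₁ + b * c₂) = a * (x₁ u - c₁) + b * (x₂ u - c₂) := by rw [hx u]; ring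
        _ ≤ _ := add_le_add (mul_le_mul_of_nonneg_left (le_max_left _ _) ha)
          (mul_le_mul_of_nonneg_left (le_max_left _ _) hb)
    · exact add_nonneg (mul_nonneg ha (le_max_right _ _)) (mul_nonneg hb (le_max_right _ _))
  calc ∫ u in Ioo (0:ℝ) t, rr x u
      ≤ (a * c₁ + b * c₂) * t + ∫ u in Ioo (0:ℝ) 1, max (x u - (a * c₁ + b * c₂)) 0 :=
        setIntegral_rr_le hxi ht _
    _ ≤ a * (c₁ * t + ∫ u in Ioo (0:ℝ) 1, max (x₁ u - c₁) 0) +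
        b * (c₂ * t + ∫ u in Ioo (0:ℝ) 1, max (x₂ u - c₂) 0) := by linarith
    _ = a * (∫ u in Ioo (0:ℝ) t, rr x₁ u) + b * ∫ u in Ioo (0:ℝ) t, rr x₂ u := by
        rw [heq₁, heq₂]

lemma setIntegral_rr_eq_of_midpoint {y x x₁ x₂ : ℝ → ℝ} {t : ℝ} (hx₁ : x₁ ∈ Omega y)
    (hx₂ : x₂ ∈ Omega y) (havg : ∀ u, x u = (x₁ u + x₂ u) / 2) (ht : t ∈ Ioo (0:ℝ) 1)
    (he : ∫ s in Ioo (0:ℝ) t, rr x s = ∫ s in Ioo (0:ℝ) t, rr y s) :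
    (∫ s in Ioo (0:ℝ) t, rr x₁ s = ∫ s in Ioo (0:ℝ) t, rr y s) ∧
      ∫ s in Ioo (0:ℝ) t, rr x₂ s = ∫ s in Ioo (0:ℝ) t, rr y s := by
  have hconv := setIntegral_rr_le_of_eq_mul_add_mul (x := x) (a := 1 / 2) (b := 1 / 2) (by norm_num)
    (by norm_num) hx₁.1 hx₂.1 (fun u => by rw [havg u]; ring) ht
  have hmaj₁ := hx₁.2.1 t ⟨ht.1.le, ht.2⟩
  have hmaj₂ := hx₂.2.1 t ⟨ht.1.le, ht.2⟩
  constructor <;> linarith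

theorem equal_partial_integrals_of_average_general (y x x₁ x₂ : ℝ → ℝ)
    (hx₁ : x₁ ∈ Omega y) (hx₂ : x₂ ∈ Omega y)
    (havg : ∀ u, x u = (x₁ u + x₂ u) / 2)
    (t₁ t₂ : ℝ) (h0 : 0 < t₁) (h12 : t₁ < t₂) (h21 : t₂ < 1)
    (he₁ : (∫ s in Ioo (0:ℝ) t₁, rr x s) = ∫ s in Ioo (0:ℝ) t₁, rr y s)
    (he₂ : (∫ s in Ioo (0:ℝ) t₂, rr x s) = ∫ s in Ioo (0:ℝ) t₂, rr y s) :
    ((∫ s in Ioo (0:ℝ) t₁, rr x₁ s) = ∫ s in Ioo (0:ℝ) t₁, rr y s) ∧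
    ((∫ s in Ioo (0:ℝ) t₁, rr x₂ s) = ∫ s in Ioo (0:ℝ) t₁, rr y s) ∧
    ((∫ s in Ioo (0:ℝ) t₂, rr x₁ s) = ∫ s in Ioo (0:ℝ) t₂, rr y s) ∧
    ((∫ s in Ioo (0:ℝ) t₂, rr x₂ s) = ∫ s in Ioo (0:ℝ) t₂, rr y s) := by
  obtain ⟨h₁₁, h₂₁⟩ :=
    setIntegral_rr_eq_of_midpoint hx₁ hx₂ havg ⟨h0, h12.trans h21⟩ he₁
  obtain ⟨h₁₂, h₂₂⟩ :=
    setIntegral_rr_eq_of_midpoint hx₁ hx₂ havg ⟨h0.trans h12, h21⟩ he₂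
  exact ⟨h₁₁, h₂₁, h₁₂, h₂₂⟩

theorem equal_partial_integrals_of_average (y x x₁ x₂ : ℝ → ℝ)
    (hy : IntegrableOn y (Ioo (0:ℝ) 1))
    (hx : x ∈ Omega y) (hx₁ : x₁ ∈ Omega y) (hx₂ : x₂ ∈ Omega y)
    (havg : ∀ u, x u = (x₁ u + x₂ u) / 2)
    (t₁ t₂ : ℝ) (h0 : 0 < t₁) (h12 : t₁ < t₂) (h21 : t₂ < 1)
    (hconst : ∀ s ∈ Ico t₁ t₂, rr x s = rr x t₁)
    (he₁ : (∫ s in Ioo (0:ℝ) t₁, rr x s) = ∫ s in Ioo (0:ℝ) t₁, rr y s)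
    (he₂ : (∫ s in Ioo (0:ℝ) t₂, rr x s) = ∫ s in Ioo (0:ℝ) t₂, rr y s) :
    ((∫ s in Ioo (0:ℝ) t₁, rr x₁ s) = ∫ s in Ioo (0:ℝ) t₁, rr y s) ∧
    ((∫ s in Ioo (0:ℝ) t₁, rr x₂ s) = ∫ s in Ioo (0:ℝ) t₁, rr y s) ∧
    ((∫ s in Ioo (0:ℝ) t₂, rr x₁ s) = ∫ s in Ioo (0:ℝ) t₂, rr y s) ∧
    ((∫ s in Ioo (0:ℝ) t₂, rr x₂ s) = ∫ s in Ioo (0:ℝ) t₂, rr y s) :=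
  equal_partial_integrals_of_average_general y x x₁ x₂ hx₁ hx₂ havg t₁ t₂ h0 h12 h21 he₁ he₂
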